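/- arXiv:1508.05896 — 2 statements merged into one kernel-verified Lean document; each statement's English description precedes it below -/
import Mathlib

section
/- Let ι and J be finite index sets, c : J → ℝ with c_j > 0, α : J × ι → ℝ, and z⁰ : ι → ℝ with z⁰_i > 0. Define the posynomial f(z) = ∑_{j ∈ J} c_j ∏_{i ∈ ι} z_i^{α_{ji}} (real powers) for z with all coordinates positive, and set θ_j = c_j ∏_i (z⁰_i)^{α_{ji}} / f(z⁰) and β_i = ∑_{j ∈ J} θ_j α_{ji}. Then for every z with all coordinates positive, f(z) ≥ f(z⁰)·∏_{i ∈ ι} (z_i/z⁰_i)^{β_i}, with equality when z = z⁰. -/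
open Finset

/-- The monomial approximation of a posynomial `f(z) = ∑ⱼ cⱼ ∏ᵢ zᵢ^{αⱼᵢ}` at a positive
point `z⁰` globally under-estimates `f` on the positive orthant, with equality at `z⁰`. -/
theorem posynomial_monomial_approx_le
    {ι J : Type*} [Fintype ι] [Fintype J]
    (c : J → ℝ) (hc : ∀ j, 0 < c j) (α : J → ι → ℝ)
    (z0 : ι → ℝ) (hz0 : ∀ i, 0 < z0 i)
    (f : (ι → ℝ) → ℝ)
    (hf : ∀ z : ι → ℝ, (∀ i, 0 < z i) → f z = ∑ j, c j * ∏ i, (z i) ^ (α j i))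
    (θ : J → ℝ) (hθ : ∀ j, θ j = c j * (∏ i, (z0 i) ^ (α j i)) / f z0)
    (β : ι → ℝ) (hβ : ∀ i, β i = ∑ j, θ j * α j i) :
    (∀ z : ι → ℝ, (∀ i, 0 < z i) →
        f z0 * ∏ i, (z i / z0 i) ^ (β i) ≤ f z) ∧
      f z0 * ∏ i, (z0 i / z0 i) ^ (β i) = f z0 := by
  have heq : f z0 * ∏ i, (z0 i / z0 i) ^ (β i) = f z0 := by
    have h1 : ∀ i, (z0 i / z0 i : ℝ) ^ (β i) = 1 := by
      intro i
      rw [div_self (hz0 i).ne', Real.one_rpow]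
    simp [h1]
  refine ⟨fun z hz => ?_, heq⟩
  rcases isEmpty_or_nonempty J with hJ | hJ
  · have h0 : f z0 = 0 := by rw [hf z0 hz0]; simp
    have h0' : f z = 0 := by rw [hf z hz]; simp
    simp [h0, h0']
  · have hg0 : ∀ j, 0 < c j * ∏ i, (z0 i) ^ (α j i) :=
      fun j => mul_pos (hc j) (Finset.prod_pos fun i _ => Real.rpow_pos_of_pos (hz0 i) _)
    have hg : ∀ j, 0 < c j * ∏ i, (z i) ^ (α j i) :=
      fun j => mul_pos (hc j) (Finset.prod_pos fun i _ => Real.rpow_pos_of_pos (hz i) _)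
    have hf0 : 0 < f z0 := by
      rw [hf z0 hz0]
      exact Finset.sum_pos (fun j _ => hg0 j) Finset.univ_nonempty
    have hθpos : ∀ j, 0 < θ j := fun j => by
      rw [hθ j]; exact div_pos (hg0 j) hf0
    have hθsum : ∑ j, θ j = 1 := by
      have h2 : ∑ j, θ j = (∑ j, c j * ∏ i, (z0 i) ^ (α j i)) / f z0 := by
        rw [Finset.sum_div]; exact Finset.sum_congr rfl fun j _ => hθ j
      rw [h2, ← hf z0 hz0, div_self hf0.ne']
    have hratio : ∀ i, (0:ℝ) < z i / z0 i := fun i => div_pos (hz i) (hz0 i)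
    -- rewrite the product over i as a product over j of ratios of monomials
    have key : (∏ i, (z i / z0 i) ^ (β i))
        = ∏ j, (∏ i, (z i / z0 i) ^ (α j i)) ^ (θ j) := by
      have h3 : ∀ i, (z i / z0 i) ^ (β i) = ∏ j, ((z i / z0 i) ^ (α j i)) ^ (θ j) := by
        intro i
        rw [hβ i, Real.rpow_sum_of_pos (hratio i)]
        refine Finset.prod_congr rfl fun j _ => ?_
        rw [mul_comm, Real.rpow_mul (hratio i).le]
      rw [Finset.prod_congr rfl fun i _ => h3 i, Finset.prod_comm]
      exact Finset.prod_congr rfl fun j _ =>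
        Real.finset_prod_rpow _ _ (fun i _ => (Real.rpow_pos_of_pos (hratio i) _).le) _
    -- AM-GM
    have amgm := Real.geom_mean_le_arith_mean_weighted Finset.univ θ
        (fun j => ∏ i, (z i / z0 i) ^ (α j i))
        (fun j _ => (hθpos j).le) hθsum
        (fun j _ => (Finset.prod_pos fun i _ => Real.rpow_pos_of_pos (hratio i) _).le)
    -- identify each ratio of monomials
    have hmono : ∀ j, (∏ i, (z i / z0 i) ^ (α j i))
        = (c j * ∏ i, (z i) ^ (α j i)) / (c j * ∏ i, (z0 i) ^ (α j i)) := by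
      intro j
      rw [mul_div_mul_left _ _ (hc j).ne', ← Finset.prod_div_distrib]
      exact Finset.prod_congr rfl fun i _ => Real.div_rpow (hz i).le (hz0 i).le _
    have hsum : ∑ j, θ j * ∏ i, (z i / z0 i) ^ (α j i) = f z / f z0 := by
      rw [hf z hz, Finset.sum_div]
      refine Finset.sum_congr rfl fun j _ => ?_
      rw [hmono j, hθ j, div_mul_div_comm,
        div_eq_div_iff (mul_pos hf0 (hg0 j)).ne' hf0.ne']
      ring
    calc f z0 * ∏ i, (z i / z0 i) ^ (β i)
        = f z0 * ∏ j, (∏ i, (z i / z0 i) ^ (α j i)) ^ (θ j) := by rw [key]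
      _ ≤ f z0 * (∑ j, θ j * ∏ i, (z i / z0 i) ^ (α j i)) := by
          exact mul_le_mul_of_nonneg_left amgm hf0.le
      _ = f z0 * (f z / f z0) := by rw [hsum]
      _ = f z := by field_simp
end

section
/- Let D = {(x, λ) ∈ ℝ² : λ > 0 and x < log λ} and define g : D → ℝ by g(x, λ) = −log(log λ − x) − log λ. Then g is self-concordant on D: for every p ∈ ℝ², every direction v ∈ ℝ², and every s ∈ ℝ such that p + s·v ∈ D, the function φ(s) = g(p + s·v) satisfies |φ'''(s)| ≤ 2·(φ''(s))^{3/2}. -/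
/-!
Along the line `t ↦ p + t • v` write `ℓ` for the `λ`-coordinate, `u = log ℓ - x` for the slack,
`a = ℓ'/ℓ` and `w = u'/u`. Since `ℓ` and `x` are affine, `a' = -a²`, `u' = a - v.1` and
`w' = -w² - a²/u`, so `φ = -log u - log ℓ` has `φ' = -w - a`, `φ'' = w² + a²/u + a²` and
`φ''' = -(2w³ + 3w·a²/u + 2a³/u + 2a³)`. The bound `|φ'''| ≤ 2 φ''^{3/2}` is then the
polynomial inequality `(2w³ + 3wk + 2kd + 2d³)² ≤ 4 (w² + k + d²)³` for `k = a²/u ≥ 0`.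
-/

open Set

theorem Set.EqOn.iteratedDeriv_succ_of_hasDerivAt {f F F' : ℝ → ℝ} {U : Set ℝ} {n : ℕ}
    (hU : IsOpen U) (hf : EqOn (iteratedDeriv n f) F U) (hF : ∀ t ∈ U, HasDerivAt F (F' t) t) :
    EqOn (iteratedDeriv (n + 1) f) F' U := fun t ht => by
  rw [iteratedDeriv_succ]
  exact ((hF t ht).congr_of_eventuallyEq (hf.eventuallyEq_of_mem (hU.mem_nhds ht))).deriv

theorem abs_le_two_mul_rpow_three_halves {x y : ℝ} (hy : 0 ≤ y) (h : x ^ 2 ≤ 4 * y ^ 3) :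
    |x| ≤ 2 * y ^ ((3 : ℝ) / 2) := by
  refine abs_le_of_sq_le_sq ?_ (by positivity)
  have : (y ^ ((3 : ℝ) / 2)) ^ 2 = y ^ 3 := by
    rw [← Real.rpow_mul_natCast hy, ← Real.rpow_natCast]
    norm_num
  rw [mul_pow, this]
  linarith

theorem abs_cubic_form_le_two_mul_rpow_three_halves (w k d : ℝ) (hk : 0 ≤ k) :
    |-(2 * w ^ 3 + 3 * w * k + 2 * k * d + 2 * d ^ 3)| ≤
      2 * (w ^ 2 + k + d ^ 2) ^ ((3 : ℝ) / 2) := by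
  rw [abs_neg]
  refine abs_le_two_mul_rpow_three_halves
    (add_nonneg (add_nonneg (sq_nonneg w) hk) (sq_nonneg d)) ?_
  nlinarith [mul_nonneg hk (sq_nonneg (2 * d ^ 2 + 2 * k - 3 * w * d)),
    sq_nonneg (2 * w ^ 2 * d - w * k), mul_nonneg (sq_nonneg w) (sq_nonneg k),
    mul_nonneg (mul_nonneg (sq_nonneg w) hk) (sq_nonneg d),
    mul_nonneg (sq_nonneg (w * d)) (sq_nonneg (w - d)),
    mul_nonneg (sq_nonneg w) (sq_nonneg (d ^ 2))]

namespace LogBarrier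

variable (p v : ℝ × ℝ)

def lam (t : ℝ) : ℝ := p.2 + t * v.2

noncomputable def slack (t : ℝ) : ℝ := Real.log (lam p v t) - (p.1 + t * v.1)

noncomputable def rate (t : ℝ) : ℝ := v.2 / lam p v t

noncomputable def slackRatio (t : ℝ) : ℝ := (rate p v t - v.1) / slack p v t

noncomputable def barrier (t : ℝ) : ℝ := -Real.log (slack p v t) - Real.log (lam p v t)

def domain : Set ℝ := {t | 0 < lam p v t ∧ 0 < slack p v t}

variable {p v} {t : ℝ}

theorem hasDerivAt_lam : HasDerivAt (lam p v) v.2 t :=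
  (hasDerivAt_mul_const v.2).const_add p.2

theorem hasDerivAt_rate (ht : lam p v t ≠ 0) : HasDerivAt (rate p v) (-rate p v t ^ 2) t := by
  refine ((hasDerivAt_const t v.2).div hasDerivAt_lam ht).congr_deriv ?_
  simp only [rate]
  field_simp
  ring

theorem hasDerivAt_slack (ht : lam p v t ≠ 0) :
    HasDerivAt (slack p v) (rate p v t - v.1) t :=
  (hasDerivAt_lam.log ht).sub ((hasDerivAt_mul_const v.1).const_add p.1)

theorem hasDerivAt_slackRatio (ht : lam p v t ≠ 0) (hs : slack p v t ≠ 0) :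
    HasDerivAt (slackRatio p v)
      (-(slackRatio p v t ^ 2 + rate p v t ^ 2 / slack p v t)) t := by
  refine (((hasDerivAt_rate ht).sub_const v.1).div (hasDerivAt_slack ht) hs).congr_deriv ?_
  simp only [slackRatio]
  field_simp
  ring

theorem isOpen_domain : IsOpen (domain p v) := by
  refine isOpen_iff_mem_nhds.2 fun t ht => ?_
  exact (continuousAt_const.eventually_lt hasDerivAt_lam.continuousAt ht.1).and
    (continuousAt_const.eventually_lt (hasDerivAt_slack ht.1.ne').continuousAt ht.2)

theorem hasDerivAt_barrier (ht : t ∈ domain p v) :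
    HasDerivAt (barrier p v) (-slackRatio p v t - rate p v t) t :=
  ((hasDerivAt_slack ht.1.ne').log ht.2.ne').neg.sub (hasDerivAt_lam.log ht.1.ne')

theorem hasDerivAt_barrier_deriv (ht : t ∈ domain p v) :
    HasDerivAt (fun t => -slackRatio p v t - rate p v t)
      (slackRatio p v t ^ 2 + rate p v t ^ 2 / slack p v t + rate p v t ^ 2) t := by
  refine ((hasDerivAt_slackRatio ht.1.ne' ht.2.ne').neg.sub
    (hasDerivAt_rate ht.1.ne')).congr_deriv ?_
  ring

theorem hasDerivAt_barrier_deriv2 (ht : t ∈ domain p v) :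
    HasDerivAt (fun t => slackRatio p v t ^ 2 + rate p v t ^ 2 / slack p v t + rate p v t ^ 2)
      (-(2 * slackRatio p v t ^ 3 + 3 * slackRatio p v t * (rate p v t ^ 2 / slack p v t)
        + 2 * (rate p v t ^ 2 / slack p v t) * rate p v t + 2 * rate p v t ^ 3)) t := by
  have hw := hasDerivAt_slackRatio ht.1.ne' ht.2.ne'
  have ha := hasDerivAt_rate ht.1.ne'
  refine (((hw.pow 2).add ((ha.pow 2).div (hasDerivAt_slack ht.1.ne') ht.2.ne')).add
    (ha.pow 2)).congr_deriv ?_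
  have hu := ht.2.ne'
  have hwu : rate p v t - v.1 = slackRatio p v t * slack p v t := (div_mul_cancel₀ _ hu).symm
  simp only [Pi.pow_apply, hwu]
  field_simp
  ring

end LogBarrier

open LogBarrier in
/-- The log-barrier term `g(x, λ) = −log(log λ − x) − log λ` associated with an
exponential constraint is self-concordant on its domain
`D = {(x, λ) : λ > 0 ∧ x < log λ}`: along every line through the domain,
`|φ'''(s)| ≤ 2·(φ''(s))^{3/2}` where `φ(s) = g(p + s·v)`. -/
theorem log_barrier_self_concordant
    (g : ℝ × ℝ → ℝ)
    (hg : ∀ p : ℝ × ℝ, 0 < p.2 → p.1 < Real.log p.2 →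
      g p = -Real.log (Real.log p.2 - p.1) - Real.log p.2) :
    ∀ (p v : ℝ × ℝ) (s : ℝ),
      0 < (p + s • v).2 → (p + s • v).1 < Real.log (p + s • v).2 →
      |iteratedDeriv 3 (fun t : ℝ => g (p + t • v)) s| ≤
        2 * (iteratedDeriv 2 (fun t : ℝ => g (p + t • v)) s) ^ ((3 : ℝ) / 2) := by
  intro p v s hpos hlt
  have hline : ∀ t : ℝ, p + t • v = (p.1 + t * v.1, lam p v t) := fun t => by
    ext <;> simp [lam]
  have hs : s ∈ domain p v := by
    rw [hline] at hpos hlt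
    exact ⟨hpos, sub_pos.2 hlt⟩
  have hφ : EqOn (iteratedDeriv 0 fun t => g (p + t • v)) (barrier p v) (domain p v) :=
    fun t ht => by
      rw [iteratedDeriv_zero, hline]
      exact hg _ ht.1 (sub_pos.1 ht.2)
  have hφ1 : EqOn (iteratedDeriv 1 fun t => g (p + t • v)) _ (domain p v) :=
    hφ.iteratedDeriv_succ_of_hasDerivAt isOpen_domain fun _ => hasDerivAt_barrier
  have hφ2 : EqOn (iteratedDeriv 2 fun t => g (p + t • v)) _ (domain p v) :=
    hφ1.iteratedDeriv_succ_of_hasDerivAt isOpen_domain fun _ => hasDerivAt_barrier_deriv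
  have hφ3 : EqOn (iteratedDeriv 3 fun t => g (p + t • v)) _ (domain p v) :=
    hφ2.iteratedDeriv_succ_of_hasDerivAt isOpen_domain fun _ => hasDerivAt_barrier_deriv2
  rw [hφ2 hs, hφ3 hs]
  exact abs_cubic_form_le_two_mul_rpow_three_halves _ _ _ (div_nonneg (sq_nonneg _) hs.2.le)
end
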